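/- Let w : 𝕋 → ℂ be C¹, m = m(w), and u = e^{iJ(w)} w with (d/dx)J(w) = |w|² − m. Define E(u) = ∫|u_x|² dx + (3/2)Im∫ u²\bar{u}\bar{u_x} dx + (1/2)∫|u|⁶ dx. Then E(u) = ∫|w_x|² dx − (1/2)Im∫ w²\bar{w}\bar{w_x} dx + 2m Im∫ w\bar{w_x} dx − (m/2)∫|w|⁴ dx + 2π m³, where all integrals are over [0,2π]. -/

import Mathlib

open MeasureTheory

/-- The mass `m(w) = (1/2π) ∫₀^{2π} |w|² dx`. -/
noncomputable def mass (w : ℝ → ℂ) : ℝ :=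
  (1 / (2 * Real.pi)) * ∫ y in (0:ℝ)..(2 * Real.pi), ‖w y‖ ^ 2

/-!
The gauge `u = e^{iJ} w` has a unimodular factor and `u_x = e^{iJ} (i(|w|² − m) w + w_x)`, and
the energy density is invariant under multiplying both `u` and `u_x` by a unimodular constant.
So the density of `u` is that of the pair `(w, i(|w|² − m) w + w_x)`, which expands
algebraically into the transformed density plus `m² |w|²`; finally `∫ m² |w|² = 2π m³`.
-/

/-- Integrand of `E(u)` at a point where `u = z` and `u_x = z'`. -/
noncomputable def energyDensity (z z' : ℂ) : ℝ :=
  ‖z'‖ ^ 2 + (3 / 2) * (z ^ 2 * (starRingEnd ℂ) z * (starRingEnd ℂ) z').im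
    + (1 / 2) * ‖z‖ ^ 6

/-- Integrand of the transformed energy, without the constant `2π m³`. -/
noncomputable def gaugedEnergyDensity (m : ℝ) (z z' : ℂ) : ℝ :=
  ‖z'‖ ^ 2 - (1 / 2) * (z ^ 2 * (starRingEnd ℂ) z * (starRingEnd ℂ) z').im
    + 2 * m * (z * (starRingEnd ℂ) z').im - (m / 2) * ‖z‖ ^ 4

lemma energyDensity_unimodular_mul {e : ℂ} (he : ‖e‖ = 1) (z z' : ℂ) :
    energyDensity (e * z) (e * z') = energyDensity z z' := by
  have he' : e * (starRingEnd ℂ) e = 1 := by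
    rw [Complex.mul_conj, Complex.normSq_eq_norm_sq, he]; norm_num
  have hcubic : (e * z) ^ 2 * (starRingEnd ℂ) (e * z) * (starRingEnd ℂ) (e * z')
      = (e * (starRingEnd ℂ) e) ^ 2
          * (z ^ 2 * (starRingEnd ℂ) z * (starRingEnd ℂ) z') := by
    simp only [map_mul]; ring
  simp only [energyDensity, hcubic, he', norm_mul, he, one_pow, one_mul]

lemma energyDensity_gauge (m : ℝ) (z z' : ℂ) :
    energyDensity z (Complex.I * ((‖z‖ ^ 2 - m : ℝ) : ℂ) * z + z')
      = gaugedEnergyDensity m z z' + m ^ 2 * ‖z‖ ^ 2 := by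
  have hnorm : ∀ v : ℂ, ‖v‖ ^ 2 = v.re ^ 2 + v.im ^ 2 := fun v => by
    rw [Complex.sq_norm, Complex.normSq_apply]; ring
  have h6 : ‖z‖ ^ 6 = (‖z‖ ^ 2) ^ 3 := by ring
  have h4 : ‖z‖ ^ 4 = (‖z‖ ^ 2) ^ 2 := by ring
  simp only [energyDensity, gaugedEnergyDensity]
  rw [h6, h4, hnorm z, hnorm z', hnorm]
  simp only [Complex.add_re, Complex.add_im, Complex.mul_re, Complex.mul_im, Complex.I_re,
    Complex.I_im, Complex.ofReal_re, Complex.ofReal_im, map_add, map_mul, Complex.conj_re,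
    Complex.conj_im, Complex.conj_I, Complex.neg_re, Complex.neg_im, pow_two]
  ring

lemma hasDerivAt_exp_I_mul_mul {J : ℝ → ℝ} {w : ℝ → ℂ} {j : ℝ} {w' : ℂ} {x : ℝ}
    (hJ : HasDerivAt J j x) (hw : HasDerivAt w w' x) :
    HasDerivAt (fun y => Complex.exp (Complex.I * (J y : ℂ)) * w y)
      (Complex.exp (Complex.I * (J x : ℂ)) * (Complex.I * (j : ℂ) * w x + w')) x :=
  ((hJ.ofReal_comp.const_mul Complex.I).cexp.mul hw).congr_deriv (by ring)

lemma norm_exp_I_mul_ofReal (t : ℝ) : ‖Complex.exp (Complex.I * (t : ℂ))‖ = 1 := by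
  rw [mul_comm]; exact Complex.norm_exp_ofReal_mul_I t

lemma integral_energyDensity {u v : ℝ → ℂ} (hu : Continuous u) (hv : Continuous v)
    (a b : ℝ) :
    ∫ x in a..b, energyDensity (u x) (v x)
      = (∫ x in a..b, ‖v x‖ ^ 2)
        + (3 / 2) * (∫ x in a..b,
            ((u x) ^ 2 * (starRingEnd ℂ) (u x) * (starRingEnd ℂ) (v x)).im)
        + (1 / 2) * (∫ x in a..b, ‖u x‖ ^ 6) := by
  simp only [energyDensity]
  rw [intervalIntegral.integral_add, intervalIntegral.integral_add,
    intervalIntegral.integral_const_mul, intervalIntegral.integral_const_mul]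
  all_goals apply Continuous.intervalIntegrable; fun_prop

lemma integral_gaugedEnergyDensity_add {w v : ℝ → ℂ} (hw : Continuous w) (hv : Continuous v)
    (m : ℝ) (a b : ℝ) :
    ∫ x in a..b, (gaugedEnergyDensity m (w x) (v x) + m ^ 2 * ‖w x‖ ^ 2)
      = (∫ x in a..b, ‖v x‖ ^ 2)
        - (1 / 2) * (∫ x in a..b,
            ((w x) ^ 2 * (starRingEnd ℂ) (w x) * (starRingEnd ℂ) (v x)).im)
        + 2 * m * (∫ x in a..b, (w x * (starRingEnd ℂ) (v x)).im)
        - (m / 2) * (∫ x in a..b, ‖w x‖ ^ 4)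
        + m ^ 2 * (∫ x in a..b, ‖w x‖ ^ 2) := by
  simp only [gaugedEnergyDensity]
  rw [intervalIntegral.integral_add, intervalIntegral.integral_sub, intervalIntegral.integral_add,
    intervalIntegral.integral_sub, intervalIntegral.integral_const_mul,
    intervalIntegral.integral_const_mul, intervalIntegral.integral_const_mul,
    intervalIntegral.integral_const_mul]
  all_goals apply Continuous.intervalIntegrable; fun_prop

lemma integral_norm_sq_eq_two_pi_mul_mass (w : ℝ → ℂ) :
    ∫ x in (0:ℝ)..(2 * Real.pi), ‖w x‖ ^ 2 = 2 * Real.pi * mass w := by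
  rw [mass]; field_simp

theorem stmt8_general (w w' : ℝ → ℂ) (hw : ∀ x, HasDerivAt w (w' x) x)
    (hw' : Continuous w')
    (m : ℝ) (hm : m = mass w)
    (J : ℝ → ℝ) (hJ : ∀ x, HasDerivAt J (‖w x‖ ^ 2 - m) x)
    (u : ℝ → ℂ) (hu : ∀ x, u x = Complex.exp (Complex.I * (J x : ℂ)) * w x) :
    (∫ x in (0:ℝ)..(2 * Real.pi), ‖deriv u x‖ ^ 2)
      + (3 / 2) * (∫ x in (0:ℝ)..(2 * Real.pi),
          ((u x) ^ 2 * (starRingEnd ℂ) (u x) * (starRingEnd ℂ) (deriv u x)).im)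
      + (1 / 2) * (∫ x in (0:ℝ)..(2 * Real.pi), ‖u x‖ ^ 6)
    = (∫ x in (0:ℝ)..(2 * Real.pi), ‖w' x‖ ^ 2)
      - (1 / 2) * (∫ x in (0:ℝ)..(2 * Real.pi),
          ((w x) ^ 2 * (starRingEnd ℂ) (w x) * (starRingEnd ℂ) (w' x)).im)
      + 2 * m * (∫ x in (0:ℝ)..(2 * Real.pi), (w x * (starRingEnd ℂ) (w' x)).im)
      - (m / 2) * (∫ x in (0:ℝ)..(2 * Real.pi), ‖w x‖ ^ 4)
      + 2 * Real.pi * m ^ 3 := by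
  have hwc : Continuous w := continuous_iff_continuousAt.2 fun x => (hw x).continuousAt
  have hJc : Continuous J := continuous_iff_continuousAt.2 fun x => (hJ x).continuousAt
  have hu_eq : u = fun x => Complex.exp (Complex.I * (J x : ℂ)) * w x := funext hu
  have hderiv : deriv u = fun x => Complex.exp (Complex.I * (J x : ℂ))
      * (Complex.I * ((‖w x‖ ^ 2 - m : ℝ) : ℂ) * w x + w' x) := by
    ext x; rw [hu_eq]; exact (hasDerivAt_exp_I_mul_mul (hJ x) (hw x)).deriv
  have huc : Continuous u := by rw [hu_eq]; fun_prop
  have hdc : Continuous (deriv u) := by rw [hderiv]; fun_prop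
  calc _ = ∫ x in (0:ℝ)..(2 * Real.pi), energyDensity (u x) (deriv u x) :=
        (integral_energyDensity huc hdc _ _).symm
    _ = ∫ x in (0:ℝ)..(2 * Real.pi),
          (gaugedEnergyDensity m (w x) (w' x) + m ^ 2 * ‖w x‖ ^ 2) := by
        refine intervalIntegral.integral_congr fun x _ => ?_
        simp only [hu, hderiv, energyDensity_unimodular_mul (norm_exp_I_mul_ofReal (J x)),
          energyDensity_gauge]
    _ = _ := by
        rw [integral_gaugedEnergyDensity_add hwc hw', integral_norm_sq_eq_two_pi_mul_mass w,
          ← hm]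
        ring

/-- Transformation of the DNLS energy
`E(u) = ∫ |u_x|² + (3/2) Im ∫ u² ū ū_x + (1/2) ∫ |u|⁶` under the gauge:
`E(u) = ∫ |w_x|² − (1/2) Im ∫ w² w̄ w̄_x + 2m Im ∫ w w̄_x − (m/2) ∫ |w|⁴ + 2π m³`. -/
theorem stmt8 (w w' : ℝ → ℂ) (hw : ∀ x, HasDerivAt w (w' x) x)
    (hw' : Continuous w') (hper : Function.Periodic w (2 * Real.pi))
    (m : ℝ) (hm : m = mass w)
    (J : ℝ → ℝ) (hJ : ∀ x, HasDerivAt J (‖w x‖ ^ 2 - m) x)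
    (u : ℝ → ℂ) (hu : ∀ x, u x = Complex.exp (Complex.I * (J x : ℂ)) * w x) :
    (∫ x in (0:ℝ)..(2 * Real.pi), ‖deriv u x‖ ^ 2)
      + (3 / 2) * (∫ x in (0:ℝ)..(2 * Real.pi),
          ((u x) ^ 2 * (starRingEnd ℂ) (u x) * (starRingEnd ℂ) (deriv u x)).im)
      + (1 / 2) * (∫ x in (0:ℝ)..(2 * Real.pi), ‖u x‖ ^ 6)
    = (∫ x in (0:ℝ)..(2 * Real.pi), ‖w' x‖ ^ 2)
      - (1 / 2) * (∫ x in (0:ℝ)..(2 * Real.pi),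
          ((w x) ^ 2 * (starRingEnd ℂ) (w x) * (starRingEnd ℂ) (w' x)).im)
      + 2 * m * (∫ x in (0:ℝ)..(2 * Real.pi), (w x * (starRingEnd ℂ) (w' x)).im)
      - (m / 2) * (∫ x in (0:ℝ)..(2 * Real.pi), ‖w x‖ ^ 4)
      + 2 * Real.pi * m ^ 3 :=
  stmt8_general w w' hw hw' m hm J hJ u hu
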